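/- Let A ∈ SL(4,ℂ) satisfy A⁵ = I and F∘A = c·F for some c ∈ ℂ. Suppose there exists α = (a₀,a₁,a₂,b₀,b₁,b₂) ∈ ℂ⁶ such that (aᵢ,bᵢ) ≠ (0,0) for each i ∈ {0,1,2} (the semistability condition), and there exists d ∈ ℂ with P_α∘A = d·P_α, where P_α = a₀x₀³ + a₁x₁³ + a₂x₂³ + b₀x₀²x₃ + b₁x₁²x₃ + b₂x₂²x₃. Then A = I. (Consequently, the stabilizer of any semistable point of the exceptional divisor of the Kirwan blowup at the 3A₂ cubic contains no element of order 5, so its order is not divisible by 5.) -/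

import Mathlib

open MvPolynomial

/-- The defining cubic form of the 3A₂ cubic surface: F = x₀x₁x₂ + x₃³. -/
noncomputable def F3A2 : MvPolynomial (Fin 4) ℂ :=
  X 0 * X 1 * X 2 + X 3 ^ 3

/-- The substitution action: (P∘A)(x) = P(A·x), i.e. xⱼ ↦ Σₖ Aⱼₖ·xₖ. -/
noncomputable def actM (A : Matrix (Fin 4) (Fin 4) ℂ) (P : MvPolynomial (Fin 4) ℂ) :
    MvPolynomial (Fin 4) ℂ :=
  MvPolynomial.aeval (fun j => ∑ k : Fin 4, MvPolynomial.C (A j k) * MvPolynomial.X k) P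

/-- The cubic form P_α = a₀x₀³ + a₁x₁³ + a₂x₂³ + b₀x₀²x₃ + b₁x₁²x₃ + b₂x₂²x₃ giving a
point of the exceptional ℙ⁵ of the Kirwan blowup at the 3A₂ cubic. -/
noncomputable def excPoint (a b : Fin 3 → ℂ) : MvPolynomial (Fin 4) ℂ :=
  C (a 0) * X 0 ^ 3 + C (a 1) * X 1 ^ 3 + C (a 2) * X 2 ^ 3 +
  C (b 0) * X 0 ^ 2 * X 3 + C (b 1) * X 1 ^ 2 * X 3 + C (b 2) * X 2 ^ 2 * X 3

/-!
Since `F∘A = c•F`, differentiating gives `∇F(A p) ᵥ* A = c • ∇F(p)`, so `A` maps the singular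
points `e₀, e₁, e₂` of the 3A₂ cubic to multiples of singular points: `A eᵢ = μᵢ e_{s(i)}`. As
`A⁵ = 1`, the self-map `s` of a three-element set satisfies `s⁵ = id`, hence `s = id`; the
gradient identity at `eᵢ + eⱼ` then clears the last column, so `A = diag(λ₀, λ₁, λ₂, λ₃)`.
Comparing coefficients, `λ₀λ₁λ₂ = λ₃³ = c`, and with `det A = 1` this gives `λ₃⁴ = λ₃⁵ = 1`, so
`λ₃ = 1` and `λ₀λ₁λ₂ = 1`. Semistability gives `λᵢ³ = d` or `λᵢ² = d`, so `λᵢ ∈ {d², d³}` and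
`d⁵ = 1`; then `1 = λ₀λ₁λ₂ = dᵏ` with `6 ≤ k ≤ 9` coprime to `5` forces `d = 1`, so `A = 1`.
-/

open Matrix

lemma pow_mulVec_single_of_mulVec_single {κ ι R : Type*} [Fintype ι] [DecidableEq ι]
    [CommSemiring R] {M : Matrix ι ι R} {f : κ → ι} {s : κ → κ} {μ : κ → R}
    (h : ∀ i, M *ᵥ Pi.single (f i) 1 = μ i • Pi.single (f (s i)) 1) (n : ℕ) (i : κ) :
    (M ^ n) *ᵥ Pi.single (f i) 1 =
      (∏ k ∈ Finset.range n, μ (s^[k] i)) • Pi.single (f (s^[n] i)) 1 := by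
  induction n with
  | zero => simp only [pow_zero, one_mulVec, Finset.range_zero, Finset.prod_empty, one_smul,
      Function.iterate_zero, id]
  | succ n ih =>
    rw [pow_succ', ← mulVec_mulVec, ih, mulVec_smul, h, smul_smul, Finset.prod_range_succ,
      Function.iterate_succ_apply']

lemma iterate_eq_self_of_pow_eq_one {κ ι R : Type*} [Fintype ι] [DecidableEq ι]
    [CommSemiring R] [Nontrivial R] {M : Matrix ι ι R} {f : κ → ι} {s : κ → κ} {μ : κ → R}
    (h : ∀ i, M *ᵥ Pi.single (f i) 1 = μ i • Pi.single (f (s i)) 1) (hf : f.Injective)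
    {n : ℕ} (hM : M ^ n = 1) (i : κ) : s^[n] i = i := by
  by_contra hne
  have := congrFun (pow_mulVec_single_of_mulVec_single h n i) (f i)
  simp [hM, hf.ne (Ne.symm hne)] at this

lemma fin_three_eq_id_of_iterate_five (s : Fin 3 → Fin 3) (h : s^[5] = id) : s = id := by
  revert s; decide

lemma exists_pow_eq_of_pow_five_eq_one {M : Type*} [Monoid M] {x d : M} (hx : x ^ 5 = 1)
    (h : x ^ 3 = d ∨ x ^ 2 = d) : ∃ e, (e = 2 ∨ e = 3) ∧ x = d ^ e := by
  rcases h with rfl | rfl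
  · exact ⟨2, .inl rfl, by rw [← pow_mul, show 3 * 2 = 5 + 1 from rfl, pow_succ, hx, one_mul]⟩
  · exact ⟨3, .inr rfl, by rw [← pow_mul, show 2 * 3 = 5 + 1 from rfl, pow_succ, hx, one_mul]⟩

lemma eq_one_of_prod_pow_eq_one {M : Type*} [CommMonoid M] {d : M} (hd : d ^ 5 = 1)
    {e : Fin 3 → ℕ} (he : ∀ i, e i = 2 ∨ e i = 3) (h : ∏ i, d ^ e i = 1) : d = 1 := by
  rw [Finset.prod_pow_eq_pow_sum, Fin.sum_univ_three] at h
  refine (pow_eq_one_iff_of_coprime ?_).mp ⟨hd, h⟩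
  rw [Nat.Prime.coprime_iff_not_dvd Nat.prime_five]
  have h0 := he 0
  have h1 := he 1
  have h2 := he 2
  omega

lemma eval_actM (A : Matrix (Fin 4) (Fin 4) ℂ) (P : MvPolynomial (Fin 4) ℂ) (x : Fin 4 → ℂ) :
    eval x (actM A P) = eval (A *ᵥ x) P := by
  change aeval x (aeval _ P) = aeval (A *ᵥ x) P
  rw [comp_aeval_apply]
  congr 2
  funext j
  simp [mulVec, dotProduct, mul_comm]

lemma eval_F3A2 (x : Fin 4 → ℂ) : eval x F3A2 = x 0 * x 1 * x 2 + x 3 ^ 3 := by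
  simp [F3A2]

def gradF3A2 (x : Fin 4 → ℂ) : Fin 4 → ℂ :=
  ![x 1 * x 2, x 0 * x 2, x 0 * x 1, 3 * x 3 ^ 2]

lemma eval_F3A2_add_smul (y w : Fin 4 → ℂ) (t : ℂ) :
    eval (y + t • w) F3A2 = eval y F3A2 + t * (gradF3A2 y ⬝ᵥ w) +
      t ^ 2 * (gradF3A2 w ⬝ᵥ y) + t ^ 3 * eval w F3A2 := by
  simp [eval_F3A2, gradF3A2, dotProduct, Fin.sum_univ_four]
  ring

section Stabilizer

variable {B : Matrix (Fin 4) (Fin 4) ℂ} {c : ℂ}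

lemma gradF3A2_mulVec_dotProduct (hc : actM B F3A2 = c • F3A2) (p v : Fin 4 → ℂ) :
    gradF3A2 (B *ᵥ p) ⬝ᵥ (B *ᵥ v) = c * (gradF3A2 p ⬝ᵥ v) := by
  have h (t : ℂ) := congrArg (eval (p + t • v)) hc
  simp only [eval_actM, smul_eval, mulVec_add, mulVec_smul, eval_F3A2_add_smul] at h
  -- the coefficient of `t` in a cubic polynomial in `t` is read off from its values at `±1, ±2`
  linear_combination (2 / 3) * h 1 - (2 / 3) * h (-1) - (1 / 12) * h 2 + (1 / 12) * h (-2)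

lemma gradF3A2_mulVec_vecMul (hc : actM B F3A2 = c • F3A2) (p : Fin 4 → ℂ) :
    gradF3A2 (B *ᵥ p) ᵥ* B = c • gradF3A2 p :=
  dotProduct_eq _ _ fun v => by
    rw [← dotProduct_mulVec, smul_dotProduct, smul_eq_mul, gradF3A2_mulVec_dotProduct hc]

lemma gradF3A2_single (i : Fin 3) : gradF3A2 (Pi.single i.castSucc 1) = 0 := by
  fin_cases i <;> ext j <;> fin_cases j <;> simp [gradF3A2]

lemma exists_eq_smul_single_of_gradF3A2_eq_zero {y : Fin 4 → ℂ} (hy : y ≠ 0)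
    (h : gradF3A2 y = 0) : ∃ j : Fin 3, ∃ μ : ℂ, μ ≠ 0 ∧ y = μ • Pi.single j.castSucc 1 := by
  have h3 : y 3 = 0 := by simpa [gradF3A2] using congrFun h 3
  have h12 : y 1 * y 2 = 0 := congrFun h 0
  have h02 : y 0 * y 2 = 0 := congrFun h 1
  have h01 : y 0 * y 1 = 0 := congrFun h 2
  by_cases h0 : y 0 = 0
  · by_cases h1 : y 1 = 0
    · have h2 : y 2 ≠ 0 := fun h2 => hy (funext fun k => by fin_cases k <;> assumption)
      exact ⟨2, y 2, h2, funext fun k => by fin_cases k <;> simp_all⟩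
    · exact ⟨1, y 1, h1, funext fun k => by fin_cases k <;> simp_all⟩
  · exact ⟨0, y 0, h0, funext fun k => by fin_cases k <;> simp_all⟩

lemma exists_mulVec_single_eq_smul_single (hB : B.det ≠ 0) (hc : actM B F3A2 = c • F3A2)
    (i : Fin 3) :
    ∃ j : Fin 3, ∃ μ : ℂ, μ ≠ 0 ∧ B *ᵥ Pi.single i.castSucc 1 = μ • Pi.single j.castSucc 1 := by
  refine exists_eq_smul_single_of_gradF3A2_eq_zero (fun h => ?_) ?_
  · simpa using congrFun (eq_zero_of_mulVec_eq_zero hB h) i.castSucc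
  · refine eq_zero_of_vecMul_eq_zero hB ?_
    rw [gradF3A2_mulVec_vecMul hc, gradF3A2_single, smul_zero]

lemma exists_mulVec_single_castSucc_eq_smul_self (hB : B.det ≠ 0) (h5 : B ^ 5 = 1)
    (hc : actM B F3A2 = c • F3A2) (i : Fin 3) :
    ∃ μ : ℂ, μ ≠ 0 ∧ B *ᵥ Pi.single i.castSucc 1 = μ • Pi.single i.castSucc 1 := by
  choose s μ hμ hs using exists_mulVec_single_eq_smul_single hB hc
  have hs5 : s^[5] = id :=
    funext (iterate_eq_self_of_pow_eq_one hs (Fin.castSucc_injective 3) h5)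
  have hsi : s i = i := congrFun (fin_three_eq_id_of_iterate_five s hs5) i
  exact ⟨μ i, hμ i, by rw [hs i, hsi]⟩

lemma apply_castSucc_three_eq_zero (hc : actM B F3A2 = c • F3A2) {μ : Fin 3 → ℂ}
    (hμ : ∀ i, μ i ≠ 0)
    (hcol : ∀ i, B *ᵥ Pi.single i.castSucc 1 = μ i • Pi.single i.castSucc 1) (k : Fin 3) :
    B k.castSucc 3 = 0 := by
  have key (i j : Fin 3) := gradF3A2_mulVec_dotProduct hc
    (Pi.single i.castSucc 1 + Pi.single j.castSucc 1) (Pi.single 3 1)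
  simp only [mulVec_add, hcol, mulVec_single_one] at key
  fin_cases k
  · simpa [gradF3A2, dotProduct, Fin.sum_univ_four, hμ] using key 1 2
  · simpa [gradF3A2, dotProduct, Fin.sum_univ_four, hμ] using key 0 2
  · simpa [gradF3A2, dotProduct, Fin.sum_univ_four, hμ] using key 0 1

lemma isDiag_of_actM_F3A2 (hB : B.det ≠ 0) (h5 : B ^ 5 = 1) (hc : actM B F3A2 = c • F3A2) :
    B.IsDiag := by
  choose μ hμ hcol using exists_mulVec_single_castSucc_eq_smul_self hB h5 hc
  intro j i hji
  induction i using Fin.lastCases with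
  | last =>
    induction j using Fin.lastCases with
    | last => exact absurd rfl hji
    | cast k => exact apply_castSucc_three_eq_zero hc hμ hcol k
  | cast i => simpa [mulVec_single_one, hji] using congrFun (hcol i) j

end Stabilizer

section Diagonal

variable {l : Fin 4 → ℂ}

lemma coeff_eq_of_actM_diagonal_F3A2 {c : ℂ} (hc : actM (diagonal l) F3A2 = c • F3A2) :
    l 0 * l 1 * l 2 = c ∧ l 3 ^ 3 = c := by
  have h (x : Fin 4 → ℂ) := congrArg (eval x) hc
  simp only [eval_actM, smul_eval, eval_F3A2, mulVec_diagonal] at h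
  constructor
  · simpa using h ![1, 1, 1, 0]
  · simpa using h ![0, 0, 0, 1]

lemma pow_three_eq_or_pow_two_eq_of_actM_diagonal_excPoint {a b : Fin 3 → ℂ} {d : ℂ}
    {i : Fin 3} (hsemi : ¬(a i = 0 ∧ b i = 0)) (hl3 : l 3 = 1)
    (hd : actM (diagonal l) (excPoint a b) = d • excPoint a b) :
    l i.castSucc ^ 3 = d ∨ l i.castSucc ^ 2 = d := by
  have h (x : Fin 4 → ℂ) := congrArg (eval x) hd
  simp only [eval_actM, smul_eval] at h
  have hab : a i * l i.castSucc ^ 3 = d * a i ∧ b i * l i.castSucc ^ 2 = d * b i := by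
    have h1 := h (Pi.single i.castSucc 1)
    have h2 := h (Pi.single i.castSucc 1 + Pi.single 3 1)
    fin_cases i <;> simp [excPoint, mulVec_diagonal, hl3] at h1 h2 ⊢ <;>
      exact ⟨h1, by linear_combination h2 - h1⟩
  rcases not_and_or.mp hsemi with ha | hb
  · exact .inl (mul_left_cancel₀ ha (hab.1.trans (mul_comm _ _)))
  · exact .inr (mul_left_cancel₀ hb (hab.2.trans (mul_comm _ _)))

lemma diagonal_eq_one_of_actM {a b : Fin 3 → ℂ} {c d : ℂ} (h5 : diagonal l ^ 5 = 1)
    (hdet : (diagonal l).det = 1) (hc : actM (diagonal l) F3A2 = c • F3A2)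
    (hsemi : ∀ i : Fin 3, ¬(a i = 0 ∧ b i = 0))
    (hd : actM (diagonal l) (excPoint a b) = d • excPoint a b) : diagonal l = 1 := by
  rw [diagonal_pow] at h5
  have hl5 (i : Fin 4) : l i ^ 5 = 1 := by
    simpa using congrFun (congrFun h5 i) i
  rw [det_diagonal, Fin.prod_univ_four] at hdet
  obtain ⟨hc012, hc3⟩ := coeff_eq_of_actM_diagonal_F3A2 hc
  have hl3 : l 3 = 1 := (pow_eq_one_iff_of_coprime (by norm_num : Nat.Coprime 5 4)).mp
    ⟨hl5 3, by linear_combination l 3 * hc3 - l 3 * hc012 + hdet⟩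
  have hroot (i : Fin 3) := pow_three_eq_or_pow_two_eq_of_actM_diagonal_excPoint (hsemi i) hl3 hd
  have hd5 : d ^ 5 = 1 := by
    rcases hroot 0 with h | h <;> rw [← h, ← pow_mul, mul_comm, pow_mul, hl5, one_pow]
  choose e he hle using fun i => exists_pow_eq_of_pow_five_eq_one (hl5 _) (hroot i)
  have hd1 : d = 1 := by
    refine eq_one_of_prod_pow_eq_one hd5 he ?_
    simp only [Fin.prod_univ_three, ← hle]
    show l 0 * l 1 * l 2 = 1
    rw [hc012, ← hc3, hl3, one_pow]
  have hl : l = fun _ => 1 := by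
    funext i
    induction i using Fin.lastCases with
    | last => exact hl3
    | cast i => rw [hle i, hd1, one_pow]
  rw [hl, diagonal_one]

end Diagonal

/-- No stabilizer of a semistable point of the exceptional divisor of the Kirwan
blowup at the 3A₂ cubic contains an element of order 5: if A ∈ SL(4,ℂ) satisfies
A⁵ = I, F∘A = c·F for some c, and fixes (up to scalar) a semistable point P_α of the
exceptional ℙ⁵ (i.e. (aᵢ,bᵢ) ≠ (0,0) for each i), then A = I. -/
theorem no_order_five_stabilizers (A : Matrix.SpecialLinearGroup (Fin 4) ℂ)
    (h5 : A ^ 5 = 1)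
    (hF : ∃ c : ℂ, actM (A : Matrix (Fin 4) (Fin 4) ℂ) F3A2 = c • F3A2)
    (hfix : ∃ a b : Fin 3 → ℂ,
      (∀ i : Fin 3, ¬(a i = 0 ∧ b i = 0)) ∧
      (∃ d : ℂ, actM (A : Matrix (Fin 4) (Fin 4) ℂ) (excPoint a b) = d • excPoint a b)) :
    A = 1 := by
  obtain ⟨c, hc⟩ := hF
  obtain ⟨a, b, hsemi, d, hd⟩ := hfix
  have hdet : (A : Matrix (Fin 4) (Fin 4) ℂ).det = 1 := A.prop
  have hA5 : (A : Matrix (Fin 4) (Fin 4) ℂ) ^ 5 = 1 := by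
    rw [← Matrix.SpecialLinearGroup.coe_pow, h5, Matrix.SpecialLinearGroup.coe_one]
  have hdiag := (isDiag_iff_diagonal_diag _).mp
    (isDiag_of_actM_F3A2 (by simp [hdet]) hA5 hc)
  rw [← hdiag] at hdet hA5 hc hd
  exact Subtype.ext (hdiag.symm.trans (diagonal_eq_one_of_actM hA5 hdet hc hsemi hd))
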